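/- arXiv:1903.04819 — 3 statements merged into one kernel-verified Lean document; each statement's English description precedes it below -/
import Mathlib

section
/- Radial limits of a function in the commutative resolvent algebra are almost everywhere constant in the directions of any subspace: let X be a finite-dimensional real inner product space, let f ∈ C_R(X), let V ⊆ X be a nonzero linear subspace, and let w ∈ X. Then there exists c ∈ ℂ such that, with respect to the spherical measure on the unit sphere of V (the measure induced on the unit sphere S(V) = {v ∈ V : ‖v‖ = 1} by any Haar (translation-invariant, locally finite, positive) measure on V, e.g. via Mathlib's Measure.toSphere), for almost every v ∈ S(V) the limit lim_{t→+∞} f(t·v + w) exists and equals c. -/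
open Filter Topology
open scoped BoundedContinuousFunction InnerProductSpace

noncomputable section

variable (X : Type*) [NormedAddCommGroup X] [InnerProductSpace ℝ X]

/-- The resolvent functions `h^λ_x : y ↦ 1/(iλ - ⟨x,y⟩)`, as elements of `C_b(X, ℂ)`. -/
def resolventFns : Set (X →ᵇ ℂ) :=
  {f | ∃ (x : X) (l : ℝ), l ≠ 0 ∧
    ∀ y : X, f y = (Complex.I * (l : ℂ) - ((⟪x, y⟫_ℝ : ℝ) : ℂ))⁻¹}

/-- The commutative resolvent algebra `C_R(X)`. -/
def CR : StarSubalgebra ℂ (X →ᵇ ℂ) :=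
  (StarAlgebra.adjoin ℂ (resolventFns X)).topologicalClosure

/-
The functions with almost everywhere constant radial limits form a closed star-subalgebra of
`C_b(X, ℂ)`: closedness because the limit is `1`-Lipschitz in the sup norm. So it suffices to
check the generators `h^λ_x`. Along the ray `t ↦ t v + w` the denominator is
`iλ - t⟨x, v⟩ - ⟨x, w⟩`, so `h^λ_x` tends to `0` unless `v` lies in the hyperplane `x^⊥`; if
`V ⊆ x^⊥` the function is constant on every ray, and otherwise `V ∩ x^⊥` is a proper subspace of
`V`, whose trace on the sphere is null.
-/

open MeasureTheory

theorem MeasureTheory.Measure.ae_toSphere_notMem_submodule {E : Type*} [NormedAddCommGroup E]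
    [NormedSpace ℝ E] [MeasurableSpace E] [BorelSpace E] [FiniteDimensional ℝ E]
    (μ : Measure E) [μ.IsAddHaarMeasure] {K : Submodule ℝ E} (hK : K ≠ ⊤) :
    ∀ᵐ v : Metric.sphere (0 : E) 1 ∂μ.toSphere, (v : E) ∉ K := by
  have hmeas : MeasurableSet {v : Metric.sphere (0 : E) 1 | (v : E) ∈ K} :=
    (K.closed_of_finiteDimensional.preimage continuous_subtype_val).measurableSet
  simp only [ae_iff, not_not]
  rw [μ.toSphere_apply' hmeas]
  refine mul_eq_zero_of_right _ (measure_mono_null ?_ (Measure.addHaar_submodule μ K hK))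
  rintro _ ⟨r, -, _, ⟨v, hv, rfl⟩, rfl⟩
  exact K.smul_mem r hv

theorem tendsto_inv_const_sub_affine_atTop (z : ℂ) (b : ℝ) {a : ℝ} (ha : a ≠ 0) :
    Tendsto (fun t : ℝ => (z - ((t * a + b : ℝ) : ℂ))⁻¹) atTop (𝓝 0) :=
  tendsto_inv₀_cobounded.comp <| (tendsto_const_sub_cobounded z).comp <|
    (RCLike.tendsto_ofReal_cobounded_cobounded ℂ).comp <| (tendsto_add_const_cobounded b).comp <|
      (tendsto_mul_right_cobounded ha).comp <| tendsto_id.mono_right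
        IsOrderBornology.atTop_le_cobounded

theorem BoundedContinuousFunction.dist_le_of_tendsto_comp {Y α β : Type*} [TopologicalSpace Y]
    [PseudoMetricSpace β] {f g : Y →ᵇ β} {γ : α → Y} {l : Filter α} [l.NeBot] {a b : β}
    (hf : Tendsto (fun t => f (γ t)) l (𝓝 a)) (hg : Tendsto (fun t => g (γ t)) l (𝓝 b)) :
    dist a b ≤ dist f g :=
  le_of_tendsto (hf.dist hg) (.of_forall fun _ => dist_coe_le_dist _)

section AeTendstoConst

variable {Y ι α : Type*} [TopologicalSpace Y] [MeasurableSpace ι]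

def aeTendstoConstSubalgebra (ν : Measure ι) (γ : ι → α → Y) (l : Filter α) :
    StarSubalgebra ℂ (Y →ᵇ ℂ) where
  carrier := {f | ∃ c : ℂ, ∀ᵐ i ∂ν, Tendsto (fun t => f (γ i t)) l (𝓝 c)}
  mul_mem' := by
    rintro f g ⟨c, hc⟩ ⟨d, hd⟩
    exact ⟨c * d, hc.mp (hd.mono fun i hg hf => hf.mul hg)⟩
  add_mem' := by
    rintro f g ⟨c, hc⟩ ⟨d, hd⟩
    exact ⟨c + d, hc.mp (hd.mono fun i hg hf => hf.add hg)⟩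
  algebraMap_mem' z := ⟨z, .of_forall fun _ => tendsto_const_nhds⟩
  star_mem' := by
    rintro f ⟨c, hc⟩
    exact ⟨star c, hc.mono fun i hf => hf.star⟩

theorem isClosed_aeTendstoConstSubalgebra {ν : Measure ι} (hν : ν ≠ 0) (γ : ι → α → Y)
    (l : Filter α) [l.NeBot] : IsClosed (aeTendstoConstSubalgebra ν γ l : Set (Y →ᵇ ℂ)) := by
  have : (ae ν).NeBot := ae_neBot.2 hν
  refine isSeqClosed_iff_isClosed.1 fun F f hF hFf => ?_
  choose c hc using hF
  have hc_dist (m n : ℕ) : dist (c m) (c n) ≤ dist (F m) (F n) :=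
    let ⟨_, hm, hn⟩ := ((hc m).and (hc n)).exists
    BoundedContinuousFunction.dist_le_of_tendsto_comp hm hn
  obtain ⟨L, hL⟩ := cauchySeq_tendsto_of_complete <| Metric.cauchySeq_iff.2 fun ε hε =>
    (Metric.cauchySeq_iff.1 hFf.cauchySeq ε hε).imp fun _ hN m hm n hn =>
      (hc_dist m n).trans_lt (hN m hm n hn)
  refine ⟨L, ?_⟩
  filter_upwards [ae_all_iff.2 hc] with i hi
  have hunif : TendstoUniformly (fun n => F n ∘ γ i) (f ∘ γ i) atTop :=
    (BoundedContinuousFunction.tendsto_iff_tendstoUniformly.1 hFf).comp (γ i)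
  exact hunif.tendsto_of_eventually_tendsto (.of_forall hi) hL

end AeTendstoConst

theorem resolventFns_subset_aeTendstoConstSubalgebra [FiniteDimensional ℝ X] (V : Submodule ℝ X)
    (w : X) [MeasurableSpace V] [BorelSpace V] (μ : Measure V) [μ.IsAddHaarMeasure] :
    resolventFns X ⊆
      aeTendstoConstSubalgebra μ.toSphere (fun v (t : ℝ) => t • ((v : V) : X) + w) atTop := by
  rintro f ⟨x, l, -, hf⟩
  have hf_ray (u : X) (t : ℝ) :
      f (t • u + w) = (Complex.I * l - ((t * ⟪x, u⟫_ℝ + ⟪x, w⟫_ℝ : ℝ) : ℂ))⁻¹ := by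
    rw [hf, inner_add_right, real_inner_smul_right]
  by_cases hxV : ∀ v : V, ⟪x, (v : X)⟫_ℝ = 0
  · refine ⟨(Complex.I * l - ((⟪x, w⟫_ℝ : ℝ) : ℂ))⁻¹, .of_forall fun v => ?_⟩
    simp only [hf_ray, hxV, mul_zero, zero_add]
    exact tendsto_const_nhds
  · have hK : LinearMap.ker ((innerₗ X x).comp V.subtype) ≠ ⊤ := by
      simpa [Submodule.eq_top_iff', LinearMap.mem_ker] using hxV
    refine ⟨0, ?_⟩
    filter_upwards [μ.ae_toSphere_notMem_submodule hK] with v hv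
    simp only [hf_ray]
    exact tendsto_inv_const_sub_affine_atTop _ _ (by simpa using hv)

open MeasureTheory in
theorem radial_limit_ae_const_general (X : Type*) [NormedAddCommGroup X] [InnerProductSpace ℝ X]
    [FiniteDimensional ℝ X]
    (f : X →ᵇ ℂ) (hf : f ∈ CR X) (V : Submodule ℝ X) (w : X)
    [MeasurableSpace V] [BorelSpace V]
    (μ : Measure V) (hμ : μ.IsAddHaarMeasure) :
    ∃ c : ℂ, ∀ᵐ (v : Metric.sphere (0 : V) 1) ∂ μ.toSphere,
      Tendsto (fun t : ℝ => f (t • ((v : V) : X) + w)) atTop (𝓝 c) := by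
  rcases eq_or_ne μ.toSphere 0 with hν | hν
  · exact ⟨0, by simp [hν]⟩
  · exact StarSubalgebra.topologicalClosure_minimal
      (StarAlgebra.adjoin_le (resolventFns_subset_aeTendstoConstSubalgebra X V w μ))
      (isClosed_aeTendstoConstSubalgebra hν _ atTop) hf

open MeasureTheory in
/-- radial limits of `f ∈ C_R(X)` are almost everywhere constant in the
directions of any nonzero subspace `V ⊆ X`: there is a `c ∈ ℂ` such that for almost every
`v` in the unit sphere of `V` (w.r.t. the spherical measure induced by any Haar measure on
`V` via `Measure.toSphere`), the limit `lim_{t → +∞} f(t·v + w)` exists and equals `c`. -/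
theorem radial_limit_ae_const (X : Type*) [NormedAddCommGroup X] [InnerProductSpace ℝ X]
    [FiniteDimensional ℝ X]
    (f : X →ᵇ ℂ) (hf : f ∈ CR X) (V : Submodule ℝ X) (hV : V ≠ ⊥) (w : X)
    [MeasurableSpace V] [BorelSpace V]
    (μ : Measure V) (hμ : μ.IsAddHaarMeasure) :
    ∃ c : ℂ, ∀ᵐ (v : Metric.sphere (0 : V) 1) ∂ μ.toSphere,
      Tendsto (fun t : ℝ => f (t • ((v : V) : X) + w)) atTop (𝓝 c) :=
  radial_limit_ae_const_general X f hf V w μ hμ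
end
end

section
/- Equivalent generation of the commutative resolvent algebra: for any real inner product space X, C_R(X) equals the smallest closed star-subalgebra of C_b(X, ℂ) containing all functions of the form y ↦ g(⟨x, y⟩), where x ranges over X and g ranges over the continuous complex-valued functions on ℝ vanishing at infinity. -/
open Filter Topology
open scoped BoundedContinuousFunction InnerProductSpace

noncomputable section

variable (X : Type*) [NormedAddCommGroup X] [InnerProductSpace ℝ X]

/-! The resolvents `h^λ_x` are `C₀` functions of `⟨x, ·⟩`, which gives one inclusion. Conversely, fix
`x` and view `y ↦ ⟨x, y⟩` as a map into the one-point compactification `ℝ ∪ {∞}`, where a `C₀`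
function of `⟨x, ·⟩` becomes a pullback of a continuous function with value `0` at `∞`. The
continuous functions on `ℝ ∪ {∞}` whose pullback lies in `C_R(X)` form a closed star-subalgebra
containing the single injective function `t ↦ (i - t)⁻¹`, `∞ ↦ 0`, so by Stone–Weierstrass it is
everything. -/

theorem OnePoint.injective_continuousMapMk {T Y : Type*} [TopologicalSpace T] [TopologicalSpace Y]
    {f : C(T, Y)} {y : Y} (h : Tendsto f (coclosedCompact T) (𝓝 y)) (hf : Function.Injective f)
    (hy : y ∉ Set.range f) : Function.Injective (continuousMapMk f y h) := by
  rintro (_ | a) (_ | b) hab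
  · rfl
  · exact (hy ⟨b, hab.symm⟩).elim
  · exact (hy ⟨a, hab⟩).elim
  · exact congrArg _ (hf hab)

namespace BoundedContinuousFunction

variable {T Y 𝕜 A : Type*} [TopologicalSpace T] [TopologicalSpace Y] [CompactSpace Y]
  [NormedField 𝕜] [NormedRing A] [NormedAlgebra 𝕜 A] [StarRing A] [NormedStarGroup A]

def compCompactStarAlgHom (φ : C(T, Y)) : C(Y, A) →⋆ₐ[𝕜] (T →ᵇ A) where
  toFun F := (mkOfCompact F).compContinuous φ
  map_one' := rfl
  map_mul' _ _ := rfl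
  map_zero' := rfl
  map_add' _ _ := rfl
  commutes' _ := rfl
  map_star' _ := rfl

theorem continuous_compCompactStarAlgHom (φ : C(T, Y)) :
    Continuous (compCompactStarAlgHom (𝕜 := 𝕜) (A := A) φ) :=
  (continuous_compContinuous φ).comp (ContinuousMap.isometryEquivBoundedOfCompact Y A).continuous

end BoundedContinuousFunction

namespace CR

open BoundedContinuousFunction Complex

theorem I_mul_ofReal_sub_ofReal_ne_zero {l : ℝ} (hl : l ≠ 0) (t : ℝ) : I * l - t ≠ 0 :=
  fun h => hl (by simpa using congrArg im h)

theorem continuous_inv_I_mul_ofReal_sub {l : ℝ} (hl : l ≠ 0) :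
    Continuous fun t : ℝ => (I * l - t)⁻¹ :=
  (continuous_const.sub continuous_ofReal).inv₀ (I_mul_ofReal_sub_ofReal_ne_zero hl)

theorem tendsto_inv_I_mul_ofReal_sub_cocompact (l : ℝ) :
    Tendsto (fun t : ℝ => (I * l - t)⁻¹) (cocompact ℝ) (𝓝 0) := by
  rw [← Metric.cobounded_eq_cocompact]
  exact tendsto_inv₀_cobounded.comp
    ((tendsto_const_sub_cobounded _).comp (RCLike.tendsto_ofReal_cobounded_cobounded ℂ))

def resolventOnePoint : C(OnePoint ℝ, ℂ) :=
  OnePoint.continuousMapMk ⟨_, continuous_inv_I_mul_ofReal_sub one_ne_zero⟩ 0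
    (by simpa [coclosedCompact_eq_cocompact] using tendsto_inv_I_mul_ofReal_sub_cocompact 1)

theorem injective_resolventOnePoint : Function.Injective resolventOnePoint := by
  refine OnePoint.injective_continuousMapMk _ (fun s t hst => ?_) ?_
  · simpa using hst
  · rintro ⟨t, ht⟩
    exact inv_ne_zero (I_mul_ofReal_sub_ofReal_ne_zero one_ne_zero t) ht

theorem topologicalClosure_adjoin_resolventOnePoint :
    (StarAlgebra.adjoin ℂ {resolventOnePoint}).topologicalClosure = ⊤ :=
  ContinuousMap.starSubalgebra_topologicalClosure_eq_top_of_separatesPoints _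
    fun _ _ hst => ⟨_, ⟨_, StarAlgebra.self_mem_adjoin_singleton ℂ _, rfl⟩,
      injective_resolventOnePoint.ne hst⟩

theorem isClosed : IsClosed (CR X : Set (X →ᵇ ℂ)) :=
  StarSubalgebra.isClosed_topologicalClosure _

theorem resolventFns_subset : resolventFns X ⊆ CR X :=
  (StarAlgebra.subset_adjoin ℂ _).trans (StarSubalgebra.le_topologicalClosure _)

variable {X}

def innerOnePoint (x : X) : C(X, OnePoint ℝ) :=
  ⟨fun y => (⟪x, y⟫_ℝ : OnePoint ℝ),
    OnePoint.continuous_coe.comp (continuous_const.inner continuous_id)⟩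

theorem compCompactStarAlgHom_innerOnePoint_mem (x : X) (F : C(OnePoint ℝ, ℂ)) :
    compCompactStarAlgHom (𝕜 := ℂ) (innerOnePoint x) F ∈ CR X := by
  set pullback : C(OnePoint ℝ, ℂ) →⋆ₐ[ℂ] (X →ᵇ ℂ) := compCompactStarAlgHom (innerOnePoint x)
  have hclosed : IsClosed ((CR X).comap pullback : Set C(OnePoint ℝ, ℂ)) :=
    (isClosed X).preimage (continuous_compCompactStarAlgHom (𝕜 := ℂ) _)
  have hres : resolventOnePoint ∈ (CR X).comap pullback :=
    resolventFns_subset X ⟨x, 1, one_ne_zero, fun _ => rfl⟩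
  have hle :
      (StarAlgebra.adjoin ℂ {resolventOnePoint}).topologicalClosure ≤ (CR X).comap pullback :=
    StarSubalgebra.topologicalClosure_minimal
      (StarAlgebra.adjoin_le (Set.singleton_subset_iff.2 hres)) hclosed
  rw [topologicalClosure_adjoin_resolventOnePoint] at hle
  exact hle trivial

theorem mem_of_apply_eq_comp_inner {x : X} {g : ℝ → ℂ} (hg : Continuous g)
    (hg0 : Tendsto g (cocompact ℝ) (𝓝 0)) {f : X →ᵇ ℂ} (hf : ∀ y, f y = g ⟪x, y⟫_ℝ) :
    f ∈ CR X := by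
  convert compCompactStarAlgHom_innerOnePoint_mem x
    (OnePoint.continuousMapMk ⟨g, hg⟩ 0 (by rwa [coclosedCompact_eq_cocompact]))
  ext y
  exact hf y

end CR

/-- equivalent generation of the commutative resolvent algebra: `C_R(X)` equals
the smallest closed star-subalgebra of `C_b(X, ℂ)` containing all functions `y ↦ g(⟨x, y⟩)`
with `x ∈ X` and `g : ℝ → ℂ` continuous and vanishing at infinity. -/
theorem CR_eq_adjoin_C0_pullbacks (X : Type*) [NormedAddCommGroup X]
    [InnerProductSpace ℝ X] :
    CR X = (StarAlgebra.adjoin ℂ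
      {f : X →ᵇ ℂ | ∃ (x : X) (g : ℝ → ℂ), Continuous g ∧
        Tendsto g (cocompact ℝ) (𝓝 0) ∧
        ∀ y : X, f y = g (⟪x, y⟫_ℝ)}).topologicalClosure := by
  apply le_antisymm
  · refine StarSubalgebra.topologicalClosure_mono (StarAlgebra.adjoin_le ?_)
    rintro f ⟨x, l, hl, hf⟩
    exact StarAlgebra.subset_adjoin ℂ _ ⟨x, _, CR.continuous_inv_I_mul_ofReal_sub hl,
      CR.tendsto_inv_I_mul_ofReal_sub_cocompact l, hf⟩
  · refine StarSubalgebra.topologicalClosure_minimal (StarAlgebra.adjoin_le ?_) (CR.isClosed X)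
    rintro f ⟨x, g, hg, hg0, hf⟩
    exact CR.mem_of_apply_eq_comp_inner hg hg0 hf
end
end

section
/- Compatibility of commutative resolvent algebras along orthogonal projections: let X be a real inner product space, let V ⊆ X be a finite-dimensional subspace with orthogonal projection P_V : X → V, and let f ∈ C_R(V), where V is regarded as a real inner product space in its own right. Then the pullback f ∘ P_V belongs to C_R(X). -/
/-!
Pulling back along the orthogonal projection `P_V` is a continuous star-algebra homomorphism
`C_b(V, ℂ) → C_b(X, ℂ)`, and it sends each generator `h^λ_x` of `C_R(V)` to the generator `h^λ_x`
of `C_R(X)`, because `⟪x, P_V y⟫ = ⟪x, y⟫` for `x ∈ V`. A continuous star-algebra homomorphism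
that maps generators to generators maps the closed star-subalgebra they generate into the one
generated by their images.
-/

open Filter Topology
open scoped BoundedContinuousFunction InnerProductSpace

noncomputable section

variable (X : Type*) [NormedAddCommGroup X] [InnerProductSpace ℝ X]

namespace BoundedContinuousFunction

variable {𝕜 α β γ : Type*} [TopologicalSpace α] [TopologicalSpace γ] [NormedField 𝕜]
  [NormedRing β] [NormedAlgebra 𝕜 β] [StarRing β] [NormedStarGroup β]

def compContinuousStarAlgHom (g : C(γ, α)) : (α →ᵇ β) →⋆ₐ[𝕜] (γ →ᵇ β) where
  toFun f := f.compContinuous g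
  map_one' := rfl
  map_mul' _ _ := rfl
  map_zero' := rfl
  map_add' _ _ := rfl
  commutes' _ := rfl
  map_star' _ := rfl

theorem continuous_compContinuousStarAlgHom (g : C(γ, α)) :
    Continuous (compContinuousStarAlgHom (𝕜 := 𝕜) (β := β) g) :=
  continuous_compContinuous g

end BoundedContinuousFunction

theorem StarAlgHom.mapsTo_topologicalClosure_adjoin {R A B : Type*} [CommSemiring R] [StarRing R]
    [TopologicalSpace A] [Semiring A] [StarRing A] [Algebra R A] [StarModule R A]
    [IsTopologicalSemiring A] [ContinuousStar A]
    [TopologicalSpace B] [Semiring B] [StarRing B] [Algebra R B] [StarModule R B]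
    [IsTopologicalSemiring B] [ContinuousStar B]
    (φ : A →⋆ₐ[R] B) (hφ : Continuous φ) {s : Set A} {t : Set B} (hst : Set.MapsTo φ s t) :
    Set.MapsTo φ (StarAlgebra.adjoin R s).topologicalClosure
      (StarAlgebra.adjoin R t).topologicalClosure := by
  have hadjoin : (StarAlgebra.adjoin R s).map φ ≤ StarAlgebra.adjoin R t := by
    rw [StarAlgHom.map_adjoin]
    exact StarAlgebra.adjoin_mono hst.image_subset
  intro a ha
  exact StarSubalgebra.topologicalClosure_mono hadjoin
    (StarSubalgebra.map_topologicalClosure_le _ φ hφ ⟨a, ha, rfl⟩)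

variable {X}

theorem Submodule.mapsTo_resolventFns_compContinuous_orthogonalProjectionOnto
    (V : Submodule ℝ X) [V.HasOrthogonalProjection] :
    Set.MapsTo (fun f : V →ᵇ ℂ => f.compContinuous (V.orthogonalProjectionOnto : C(X, V)))
      (resolventFns V) (resolventFns X) := by
  rintro h ⟨x, l, hl, hx⟩
  refine ⟨x, l, hl, fun y => ?_⟩
  change h (V.orthogonalProjectionOnto y) = _
  rw [hx, Submodule.inner_orthogonalProjectionOnto_eq_of_mem_left]

theorem Submodule.compContinuous_orthogonalProjectionOnto_mem_CR (V : Submodule ℝ X)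
    [V.HasOrthogonalProjection] {f : V →ᵇ ℂ} (hf : f ∈ CR V) :
    f.compContinuous (V.orthogonalProjectionOnto : C(X, V)) ∈ CR X :=
  StarAlgHom.mapsTo_topologicalClosure_adjoin
    (BoundedContinuousFunction.compContinuousStarAlgHom (𝕜 := ℂ) _)
    (BoundedContinuousFunction.continuous_compContinuousStarAlgHom _)
    V.mapsTo_resolventFns_compContinuous_orthogonalProjectionOnto hf

/-- compatibility of commutative resolvent algebras along orthogonal
projections: for a finite dimensional subspace `V ⊆ X` and `f ∈ C_R(V)` (with `V` regarded as
a real inner product space in its own right), the pullback `f ∘ P_V` belongs to `C_R(X)`. -/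
theorem CR_pullback_orthogonalProjection (X : Type*) [NormedAddCommGroup X]
    [InnerProductSpace ℝ X] (V : Submodule ℝ X) [FiniteDimensional ℝ V]
    (f : ↥V →ᵇ ℂ) (hf : f ∈ CR ↥V)
    (F : X →ᵇ ℂ) (hF : ∀ y : X, F y = f (V.orthogonalProjectionOnto y)) :
    F ∈ CR X := by
  have hF_eq : F = f.compContinuous (V.orthogonalProjectionOnto : C(X, V)) :=
    BoundedContinuousFunction.ext hF
  exact hF_eq ▸ V.compContinuous_orthogonalProjectionOnto_mem_CR hf
end
end
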